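/- Let x ∈ ℝⁿ with f(x) ≠ 0 and suppose the flow S_t x is defined and f(S_t x) ≠ 0 for all t ≥ 0. Let M be a C¹ function on a neighborhood of the forward orbit of x with values in the symmetric n×n matrices, and let φ₁, φ₂ be solutions of the variational equation φ̇(t) = Df(S_t x)φ(t). Then for all t ≥ 0: d/dt [φ₁(t)^T P_{S_t x}^T M(S_t x) P_{S_t x} φ₂(t)] = φ₁(t)^T P_{S_t x}^T (LM(S_t x)) P_{S_t x} φ₂(t). -/

import Mathlib

open Matrix Set Filter MeasureTheory

/-- Euclidean norm of a vector in `ℝⁿ`. -/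
noncomputable def enorm {n : ℕ} (v : Fin n → ℝ) : ℝ := Real.sqrt (∑ i, v i ^ 2)

/-- Operator norm of a matrix induced by the Euclidean norm. -/
noncomputable def opn {n : ℕ} (A : Matrix (Fin n) (Fin n) ℝ) : ℝ :=
  ‖Matrix.toEuclideanCLM (𝕜 := ℝ) A‖

/-- The projection `P_x = I - f(x)f(x)ᵀ/‖f(x)‖²` onto the hyperplane perpendicular to `f(x)`. -/
noncomputable def Pm {n : ℕ} (f : (Fin n → ℝ) → Fin n → ℝ) (x : Fin n → ℝ) :
    Matrix (Fin n) (Fin n) ℝ :=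
  1 - (_root_.enorm (f x) ^ 2)⁻¹ • Matrix.vecMulVec (f x) (f x)

/-- The differential operator
`LM(x) = M′(x) + Df(x)ᵀM(x) + M(x)Df(x) - M(x)f(x)f(x)ᵀ(Df(x)+Df(x)ᵀ)/‖f(x)‖²
  - (Df(x)+Df(x)ᵀ)f(x)f(x)ᵀM(x)/‖f(x)‖²`,
where the orbital derivative `M′(x)` has entries `∇M_ij(x) ⋅ f(x)`. -/
noncomputable def LMop {n : ℕ} (f : (Fin n → ℝ) → Fin n → ℝ)
    (Df M : (Fin n → ℝ) → Matrix (Fin n) (Fin n) ℝ) (x : Fin n → ℝ) :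
    Matrix (Fin n) (Fin n) ℝ :=
  (Matrix.of fun i j => fderiv ℝ (fun y => M y i j) x (f x))
    + (Df x)ᵀ * M x + M x * Df x
    - (_root_.enorm (f x) ^ 2)⁻¹ • (M x * Matrix.vecMulVec (f x) (f x) * (Df x + (Df x)ᵀ))
    - (_root_.enorm (f x) ^ 2)⁻¹ • ((Df x + (Df x)ᵀ) * Matrix.vecMulVec (f x) (f x) * M x)


/-! Write `u = f ∘ S_· x` and `A = Df(S_t x)`. Since `u` itself solves the variational equation
`u' = A u`, differentiating `P = I - u uᵀ/‖u‖²` shows that `ψ = P φ` solves the linear equation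
`ψ' = B ψ` with `B = A - u uᵀ (A + Aᵀ)/‖u‖²`. Expanding `Bᵀ M + M B` gives exactly the zeroth-order
terms of `LM`, so `LM = M′ + Bᵀ M + M B` and the claim is the product rule for `ψ₁ᵀ M ψ₂`. -/

noncomputable def projectedJacobian {n : ℕ} (v : Fin n → ℝ) (A : Matrix (Fin n) (Fin n) ℝ) :
    Matrix (Fin n) (Fin n) ℝ :=
  A - (_root_.enorm v ^ 2)⁻¹ • (vecMulVec v v * (A + Aᵀ))

theorem enorm_sq_eq_dotProduct {n : ℕ} (v : Fin n → ℝ) : _root_.enorm v ^ 2 = v ⬝ᵥ v := by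
  rw [_root_.enorm, Real.sq_sqrt (Finset.sum_nonneg fun i _ => sq_nonneg _)]
  simp only [dotProduct, sq]

theorem Pm_mulVec {n : ℕ} (f : (Fin n → ℝ) → Fin n → ℝ) (y v : Fin n → ℝ) :
    Pm f y *ᵥ v = v - ((f y ⬝ᵥ f y)⁻¹ * (f y ⬝ᵥ v)) • f y := by
  rw [Pm, sub_mulVec, one_mulVec, smul_mulVec, vecMulVec_mulVec, op_smul_eq_smul, smul_smul,
    enorm_sq_eq_dotProduct]

theorem dotProduct_transpose_mul_mul_mulVec {m k R : Type*} [Fintype m] [Fintype k]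
    [CommSemiring R] (P : Matrix m k R) (N : Matrix m m R) (v w : k → R) :
    v ⬝ᵥ (Pᵀ * N * P) *ᵥ w = (P *ᵥ v) ⬝ᵥ N *ᵥ (P *ᵥ w) := by
  rw [← mulVec_mulVec, ← mulVec_mulVec, dotProduct_mulVec, vecMul_transpose]

theorem LMop_eq {n : ℕ} (f : (Fin n → ℝ) → Fin n → ℝ)
    (Df M : (Fin n → ℝ) → Matrix (Fin n) (Fin n) ℝ) (y : Fin n → ℝ) :
    LMop f Df M y = (of fun i j => fderiv ℝ (fun z => M z i j) y (f y))
      + (projectedJacobian (f y) (Df y))ᵀ * M y + M y * projectedJacobian (f y) (Df y) := by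
  simp only [LMop, projectedJacobian, transpose_sub, transpose_smul, transpose_mul,
    transpose_add, transpose_transpose, transpose_vecMulVec, sub_mul, mul_sub, smul_mul_assoc,
    mul_smul_comm, Matrix.mul_assoc, add_comm (Df y)ᵀ]
  abel

section Calculus

variable {𝕜 m : Type*} [NontriviallyNormedField 𝕜] [Fintype m] {u v : 𝕜 → m → 𝕜} {u' v' : m → 𝕜}
  {s : Set 𝕜} {t : 𝕜}

theorem HasDerivWithinAt.dotProduct (hu : HasDerivWithinAt u u' s t)
    (hv : HasDerivWithinAt v v' s t) :
    HasDerivWithinAt (fun τ => u τ ⬝ᵥ v τ) (u' ⬝ᵥ v t + u t ⬝ᵥ v') s t := by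
  have h := HasDerivWithinAt.fun_sum fun i (_ : i ∈ Finset.univ) =>
    (hasDerivWithinAt_pi.1 hu i).fun_mul (hasDerivWithinAt_pi.1 hv i)
  refine h.congr_deriv ?_
  rw [_root_.dotProduct, _root_.dotProduct, ← Finset.sum_add_distrib]

theorem HasDerivWithinAt.matrix_mulVec {N : 𝕜 → Matrix m m 𝕜} {N' : Matrix m m 𝕜}
    (hN : ∀ i j, HasDerivWithinAt (fun τ => N τ i j) (N' i j) s t)
    (hv : HasDerivWithinAt v v' s t) :
    HasDerivWithinAt (fun τ => N τ *ᵥ v τ) (N' *ᵥ v t + N t *ᵥ v') s t :=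
  hasDerivWithinAt_pi.2 fun i => (hasDerivWithinAt_pi.2 (hN i)).dotProduct hv

end Calculus

theorem hasDerivWithinAt_Pm_mulVec {n : ℕ} {f : (Fin n → ℝ) → Fin n → ℝ} {g φ : ℝ → Fin n → ℝ}
    {A : Matrix (Fin n) (Fin n) ℝ} {s : Set ℝ} {t : ℝ}
    (hfg : HasDerivWithinAt (fun τ => f (g τ)) (A *ᵥ f (g t)) s t) (hne : f (g t) ≠ 0)
    (hφ : HasDerivWithinAt φ (A *ᵥ φ t) s t) :
    HasDerivWithinAt (fun τ => Pm f (g τ) *ᵥ φ τ)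
      (projectedJacobian (f (g t)) A *ᵥ (Pm f (g t) *ᵥ φ t)) s t := by
  have hc : f (g t) ⬝ᵥ f (g t) ≠ 0 := mt dotProduct_self_eq_zero.1 hne
  rw [show (fun τ => Pm f (g τ) *ᵥ φ τ) =
      fun τ => φ τ - ((f (g τ) ⬝ᵥ f (g τ))⁻¹ * (f (g τ) ⬝ᵥ φ τ)) • f (g τ) from
    funext fun τ => Pm_mulVec f (g τ) (φ τ), Pm_mulVec]
  refine (hφ.fun_sub ((((hfg.dotProduct hfg).fun_inv hc).fun_mul
    (hfg.dotProduct hφ)).fun_smul hfg)).congr_deriv ?_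
  set a := f (g t)
  simp only [projectedJacobian, enorm_sq_eq_dotProduct, sub_mulVec, smul_mulVec, ← mulVec_mulVec,
    vecMulVec_mulVec, op_smul_eq_smul, add_mulVec, mulVec_sub, mulVec_smul, dotProduct_add]
  rw [dotProduct_mulVec a Aᵀ, vecMul_transpose, dotProduct_mulVec a Aᵀ, vecMul_transpose,
    dotProduct_comm (A *ᵥ a) a]
  module

theorem stmt8_general {n : ℕ} (f : (Fin n → ℝ) → Fin n → ℝ)
    (Df : (Fin n → ℝ) → Matrix (Fin n) (Fin n) ℝ)
    (hDf : ∀ y, HasFDerivAt f (LinearMap.toContinuousLinearMap ((Df y).mulVecLin)) y)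
    -- `g t = S_t x` is the forward trajectory through `x`
    (g : ℝ → Fin n → ℝ)
    (hg : ∀ t ≥ (0:ℝ), HasDerivWithinAt g (f (g t)) (Set.Ici 0) t)
    (hfg : ∀ t ≥ (0:ℝ), f (g t) ≠ 0)
    -- `M` is C¹ and symmetric-matrix-valued on an open neighborhood of the forward orbit
    (V : Set (Fin n → ℝ)) (hV : IsOpen V) (hgV : ∀ t ≥ (0:ℝ), g t ∈ V)
    (M : (Fin n → ℝ) → Matrix (Fin n) (Fin n) ℝ)
    (hM : ∀ i j, ContDiffOn ℝ 1 (fun y => M y i j) V)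
    -- `φ₁, φ₂` are solutions of the variational equation
    (φ₁ φ₂ : ℝ → Fin n → ℝ)
    (hφ₁ : ∀ t ≥ (0:ℝ), HasDerivWithinAt φ₁ ((Df (g t)).mulVec (φ₁ t)) (Set.Ici 0) t)
    (hφ₂ : ∀ t ≥ (0:ℝ), HasDerivWithinAt φ₂ ((Df (g t)).mulVec (φ₂ t)) (Set.Ici 0) t) :
    ∀ t ≥ (0:ℝ),
      HasDerivWithinAt
        (fun τ => φ₁ τ ⬝ᵥ ((Pm f (g τ))ᵀ * M (g τ) * Pm f (g τ)).mulVec (φ₂ τ))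
        (φ₁ t ⬝ᵥ ((Pm f (g t))ᵀ * LMop f Df M (g t) * Pm f (g t)).mulVec (φ₂ t))
        (Set.Ici 0) t := by
  intro t ht
  have hfg' : HasDerivWithinAt (fun τ => f (g τ)) (Df (g t) *ᵥ f (g t)) (Ici 0) t :=
    (hDf (g t)).comp_hasDerivWithinAt t (hg t ht)
  have hψ₁ := hasDerivWithinAt_Pm_mulVec hfg' (hfg t ht) (hφ₁ t ht)
  have hψ₂ := hasDerivWithinAt_Pm_mulVec hfg' (hfg t ht) (hφ₂ t ht)
  have hMg : ∀ i j, HasDerivWithinAt (fun τ => M (g τ) i j)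
      (fderiv ℝ (fun y => M y i j) (g t) (f (g t))) (Ici 0) t := fun i j =>
    (((hM i j).differentiableOn one_ne_zero).differentiableAt
      (hV.mem_nhds (hgV t ht))).hasFDerivAt.comp_hasDerivWithinAt t (hg t ht)
  simp only [dotProduct_transpose_mul_mul_mulVec, LMop_eq]
  refine (hψ₁.dotProduct (HasDerivWithinAt.matrix_mulVec
    (N' := of fun i j => fderiv ℝ (fun y => M y i j) (g t) (f (g t))) hMg hψ₂)).congr_deriv ?_
  simp only [add_mulVec, dotProduct_add, ← mulVec_mulVec, dotProduct_mulVec _ (_ᵀ),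
    vecMul_transpose]
  ring

/-- Lemma 4.1, equation (4.1): for solutions `φ₁, φ₂` of the variational
equation along the forward orbit of `x`,
`d/dt [φ₁(t)ᵀ P_{S_t x}ᵀ M(S_t x) P_{S_t x} φ₂(t)] = φ₁(t)ᵀ P_{S_t x}ᵀ (LM(S_t x)) P_{S_t x} φ₂(t)`. -/
theorem stmt8 {n : ℕ} (f : (Fin n → ℝ) → Fin n → ℝ)
    (Df : (Fin n → ℝ) → Matrix (Fin n) (Fin n) ℝ)
    (hf : ContDiff ℝ 1 f)
    (hDf : ∀ y, HasFDerivAt f (LinearMap.toContinuousLinearMap ((Df y).mulVecLin)) y)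
    (x : Fin n → ℝ) (hfx : f x ≠ 0)
    -- `g t = S_t x` is the forward trajectory through `x`
    (g : ℝ → Fin n → ℝ) (hg0 : g 0 = x)
    (hg : ∀ t ≥ (0:ℝ), HasDerivWithinAt g (f (g t)) (Set.Ici 0) t)
    (hfg : ∀ t ≥ (0:ℝ), f (g t) ≠ 0)
    -- `M` is C¹ and symmetric-matrix-valued on an open neighborhood of the forward orbit
    (V : Set (Fin n → ℝ)) (hV : IsOpen V) (hgV : ∀ t ≥ (0:ℝ), g t ∈ V)
    (M : (Fin n → ℝ) → Matrix (Fin n) (Fin n) ℝ)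
    (hM : ∀ i j, ContDiffOn ℝ 1 (fun y => M y i j) V)
    (hMsym : ∀ y ∈ V, (M y)ᵀ = M y)
    -- `φ₁, φ₂` are solutions of the variational equation
    (φ₁ φ₂ : ℝ → Fin n → ℝ)
    (hφ₁ : ∀ t ≥ (0:ℝ), HasDerivWithinAt φ₁ ((Df (g t)).mulVec (φ₁ t)) (Set.Ici 0) t)
    (hφ₂ : ∀ t ≥ (0:ℝ), HasDerivWithinAt φ₂ ((Df (g t)).mulVec (φ₂ t)) (Set.Ici 0) t) :
    ∀ t ≥ (0:ℝ),
      HasDerivWithinAt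
        (fun τ => φ₁ τ ⬝ᵥ ((Pm f (g τ))ᵀ * M (g τ) * Pm f (g τ)).mulVec (φ₂ τ))
        (φ₁ t ⬝ᵥ ((Pm f (g t))ᵀ * LMop f Df M (g t) * Pm f (g t)).mulVec (φ₂ t))
        (Set.Ici 0) t :=
  stmt8_general f Df hDf g hg hfg V hV hgV M hM φ₁ φ₂ hφ₁ hφ₂
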